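/- arXiv:1405.0032 — 7 statements merged into one kernel-verified Lean document; each statement's English description precedes it below -/
import Mathlib

section
/- In the 2×2 X-channel example, suppose h[1][1][9], h[1][2][9], h[2][1][9], h[2][2][9] are all nonzero, and suppose the two effective determinants are nonzero: h[1][1][1]·h[1][2][9]·h[2][2][1]/h[2][2][9] − h[1][2][1]·h[1][1][9]·h[2][1][1]/h[2][1][9] ≠ 0 and h[2][1][4]·h[2][2][9]·h[1][2][4]/h[1][2][9] − h[2][2][4]·h[2][1][9]·h[1][1][4]/h[1][1][9] ≠ 0. Then the linear map ℂ⁴ → ℂ⁶ sending the symbols (a₁, b₁, a₂, b₂) to the noiseless received signals (y₁[1], y₁[4], y₁[9], y₂[1], y₂[4], y₂[9]) is injective; i.e., all four information symbols are uniquely recoverable from the received signals. -/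
/-!
The phase-two precoders align interference: at receiver 1 the undesired symbols `(a₂, b₂)`
arrive in slot 9 with exactly the gains they had in slot 4, and at receiver 2 the undesired
`(a₁, b₁)` arrive with their slot-1 gains. Subtracting that phase-one signal leaves each
receiver with two equations in its own two symbols, whose determinants are the two effective
determinants.
-/

theorem eq_and_eq_of_det_ne_zero {R : Type*} [CommRing R] [NoZeroDivisors R]
    {p q r s a b a' b' : R} (hdet : p * s - q * r ≠ 0)
    (h₁ : p * a + q * b = p * a' + q * b') (h₂ : r * a + s * b = r * a' + s * b') :
    a = a' ∧ b = b' := by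
  have ha : (p * s - q * r) * (a - a') = 0 := by linear_combination s * h₁ - q * h₂
  have hb : (p * s - q * r) * (b - b') = 0 := by linear_combination p * h₂ - r * h₁
  exact ⟨sub_eq_zero.mp ((mul_eq_zero.mp ha).resolve_left hdet),
    sub_eq_zero.mp ((mul_eq_zero.mp hb).resolve_left hdet)⟩

/-- In the 2×2 X-channel example, if the two effective determinants are nonzero, the
linear map `ℂ⁴ → ℂ⁶` sending the symbols `(a₁, b₁, a₂, b₂)` to the noiseless received
signals `(y₁[1], y₁[4], y₁[9], y₂[1], y₂[4], y₂[9])` is injective. -/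
theorem xchannel_decodability
    (h : ℕ → ℕ → ℕ → ℂ)
    (h119 : h 1 1 9 ≠ 0) (h129 : h 1 2 9 ≠ 0) (h219 : h 2 1 9 ≠ 0) (h229 : h 2 2 9 ≠ 0)
    (hdet1 : h 1 1 1 * (h 1 2 9 * h 2 2 1 / h 2 2 9)
        - h 1 2 1 * (h 1 1 9 * h 2 1 1 / h 2 1 9) ≠ 0)
    (hdet2 : h 2 1 4 * (h 2 2 9 * h 1 2 4 / h 1 2 9)
        - h 2 2 4 * (h 2 1 9 * h 1 1 4 / h 1 1 9) ≠ 0) :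
    Function.Injective (fun p : ℂ × ℂ × ℂ × ℂ =>
      let a₁ := p.1; let b₁ := p.2.1; let a₂ := p.2.2.1; let b₂ := p.2.2.2
      let x₁ : ℂ := (h 2 1 1 / h 2 1 9) * a₁ + (h 1 1 4 / h 1 1 9) * a₂
      let x₂ : ℂ := (h 2 2 1 / h 2 2 9) * b₁ + (h 1 2 4 / h 1 2 9) * b₂
      ((h 1 1 1 * a₁ + h 1 2 1 * b₁,
        h 1 1 4 * a₂ + h 1 2 4 * b₂,
        h 1 1 9 * x₁ + h 1 2 9 * x₂,
        h 2 1 1 * a₁ + h 2 2 1 * b₁,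
        h 2 1 4 * a₂ + h 2 2 4 * b₂,
        h 2 1 9 * x₁ + h 2 2 9 * x₂) : ℂ × ℂ × ℂ × ℂ × ℂ × ℂ)) := by
  rintro ⟨a₁, b₁, a₂, b₂⟩ ⟨a₁', b₁', a₂', b₂'⟩ hy
  obtain ⟨hy₁₁, hy₁₄, hy₁₉, hy₂₁, hy₂₄, hy₂₉⟩ := by simpa only [Prod.mk.injEq] using hy
  simp only [mul_add, ← mul_assoc, mul_div_cancel₀ _ h119, mul_div_cancel₀ _ h129,
    mul_div_cancel₀ _ h219, mul_div_cancel₀ _ h229] at hy₁₉ hy₂₉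
  obtain ⟨rfl, rfl⟩ := eq_and_eq_of_det_ne_zero hdet1 hy₁₁ (by linear_combination hy₁₉ - hy₁₄)
  obtain ⟨rfl, rfl⟩ := eq_and_eq_of_det_ne_zero hdet2 hy₂₄ (by linear_combination hy₂₉ - hy₂₁)
  rfl
end

section
/- In the K×2 X-channel scheme, for every phase-two time slot n the alignment identities hold: y₁[n] − y₁[t₂] = Σ_{k=1}^{K} h[1][k][n]·v₁[k][n]·s₁[k] and y₂[n] − y₂[t₁] = Σ_{k=1}^{K} h[2][k][n]·v₂[k][n]·s₂[k]. That is, with the proposed precoders the interference observed by receiver 1 at any phase-two slot equals exactly the equation y₁[t₂] it overheard in phase one (and symmetrically for receiver 2), so subtracting it leaves a linear combination of the desired symbols only. -/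
open Finset

theorem sum_mul_sub_sum_mul_eq_of_aligned {ι F : Type*} [Field F] (S : Finset ι)
    {a b u p q x : ι → F} (ha : ∀ k ∈ S, a k ≠ 0)
    (hx : ∀ k ∈ S, x k = u k * p k + b k / a k * q k) :
    ∑ k ∈ S, a k * x k - ∑ k ∈ S, b k * q k = ∑ k ∈ S, a k * u k * p k := by
  rw [← sum_sub_distrib]
  refine sum_congr rfl fun k hk => ?_
  rw [hx k hk]
  field_simp [ha k hk]
  ring

theorem Kx2_xchannel_alignment_general
    (K : ℕ)
    (h : ℕ → ℕ → ℕ → ℂ) (t₁ t₂ : ℕ) (T₂ : Set ℕ)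
    (s : ℕ → ℕ → ℂ)
    (hnz : ∀ k ∈ Finset.Icc 1 K, ∀ n ∈ T₂, h 1 k n ≠ 0 ∧ h 2 k n ≠ 0)
    (v : ℕ → ℕ → ℕ → ℂ)
    (hv1 : ∀ k, ∀ n ∈ T₂, v 1 k n = h 2 k t₁ / h 2 k n)
    (hv2 : ∀ k, ∀ n ∈ T₂, v 2 k n = h 1 k t₂ / h 1 k n)
    (x : ℕ → ℕ → ℂ)
    (hx : ∀ k, ∀ n ∈ T₂, x k n = v 1 k n * s 1 k + v 2 k n * s 2 k)
    (y : ℕ → ℕ → ℂ)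
    (hyt1 : ∀ ℓ, y ℓ t₁ = ∑ k ∈ Finset.Icc 1 K, h ℓ k t₁ * s 1 k)
    (hyt2 : ∀ ℓ, y ℓ t₂ = ∑ k ∈ Finset.Icc 1 K, h ℓ k t₂ * s 2 k)
    (hyn : ∀ ℓ, ∀ n ∈ T₂, y ℓ n = ∑ k ∈ Finset.Icc 1 K, h ℓ k n * x k n) :
    ∀ n ∈ T₂,
      y 1 n - y 1 t₂ = ∑ k ∈ Finset.Icc 1 K, h 1 k n * v 1 k n * s 1 k ∧
      y 2 n - y 2 t₁ = ∑ k ∈ Finset.Icc 1 K, h 2 k n * v 2 k n * s 2 k := by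
  intro n hn
  constructor
  · rw [hyn 1 n hn, hyt2 1]
    exact sum_mul_sub_sum_mul_eq_of_aligned _ (fun k hk => (hnz k hk n hn).1)
      fun k _ => by rw [hx k n hn, hv2 k n hn]
  · rw [hyn 2 n hn, hyt1 2]
    exact sum_mul_sub_sum_mul_eq_of_aligned _ (fun k hk => (hnz k hk n hn).2)
      fun k _ => by rw [hx k n hn, hv1 k n hn, add_comm]

/-- In the K×2 X-channel scheme, for every phase-two slot `n ∈ T₂` the alignment
identities hold:
`y₁[n] − y₁[t₂] = Σ_{k=1}^{K} h₁ₖ[n]·v₁ₖ[n]·s₁ₖ` and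
`y₂[n] − y₂[t₁] = Σ_{k=1}^{K} h₂ₖ[n]·v₂ₖ[n]·s₂ₖ`. -/
theorem Kx2_xchannel_alignment
    (K : ℕ) (hK : 1 ≤ K)
    (h : ℕ → ℕ → ℕ → ℂ) (t₁ t₂ : ℕ) (T₂ : Set ℕ)
    (s : ℕ → ℕ → ℂ)
    (hnz : ∀ k ∈ Finset.Icc 1 K, ∀ n ∈ T₂, h 1 k n ≠ 0 ∧ h 2 k n ≠ 0)
    (v : ℕ → ℕ → ℕ → ℂ)
    (hv1 : ∀ k, ∀ n ∈ T₂, v 1 k n = h 2 k t₁ / h 2 k n)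
    (hv2 : ∀ k, ∀ n ∈ T₂, v 2 k n = h 1 k t₂ / h 1 k n)
    (x : ℕ → ℕ → ℂ)
    (hx : ∀ k, ∀ n ∈ T₂, x k n = v 1 k n * s 1 k + v 2 k n * s 2 k)
    (y : ℕ → ℕ → ℂ)
    (hyt1 : ∀ ℓ, y ℓ t₁ = ∑ k ∈ Finset.Icc 1 K, h ℓ k t₁ * s 1 k)
    (hyt2 : ∀ ℓ, y ℓ t₂ = ∑ k ∈ Finset.Icc 1 K, h ℓ k t₂ * s 2 k)
    (hyn : ∀ ℓ, ∀ n ∈ T₂, y ℓ n = ∑ k ∈ Finset.Icc 1 K, h ℓ k n * x k n) :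
    ∀ n ∈ T₂,
      y 1 n - y 1 t₂ = ∑ k ∈ Finset.Icc 1 K, h 1 k n * v 1 k n * s 1 k ∧
      y 2 n - y 2 t₁ = ∑ k ∈ Finset.Icc 1 K, h 2 k n * v 2 k n * s 2 k :=
  Kx2_xchannel_alignment_general K h t₁ t₂ T₂ s hnz v hv1 hv2 x hx y hyt1 hyt2 hyn
end

section
/- For every K ≥ 1, for Lebesgue-almost every tuple of channel coefficients (h[1][k][t_j], h[2][k][t_j]) ∈ ℂ^{2K(K+1)} (k ∈ {1,…,K}, j ∈ {1,…,K+1}), all coefficients h[2][k][t_j] are nonzero and the K×K effective channel matrix Ĥ₁ — whose first row has entries h[1][k][t₁] and whose row indexed by j ∈ {3,…,K+1} has entries h[1][k][t_j]·h[2][k][t₁]/h[2][k][t_j] (column index k) — is invertible. Equivalently, the set of tuples for which some h[2][k][t_j] vanishes or Ĥ₁ is singular has Lebesgue measure zero. -/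
/-!
Clearing the denominators of `Ĥ₁` row by row turns `det Ĥ₁` times the product of all
denominators into a polynomial in the channel coefficients. This polynomial is nonzero: at a
point where every `h[2]` equals `1` and the `h[1]` form a permutation pattern, `Ĥ₁` is the
identity. The zero set of a nonzero polynomial on `ℂⁿ` is Lebesgue-null, by induction on `n`
and Fubini: off the null zero set of the leading coefficient in the first variable, every
section is the finite root set of a nonzero univariate polynomial.
-/

open MeasureTheory MvPolynomial

namespace MvPolynomial

theorem measurable_eval {σ R : Type*} [CommSemiring R] [MeasurableSpace R] [MeasurableAdd₂ R]
    [MeasurableMul₂ R] (p : MvPolynomial σ R) : Measurable fun x : σ → R => eval x p := by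
  induction p using MvPolynomial.induction_on with
  | C a => simp
  | add p q hp hq => simp only [map_add]; exact hp.add hq
  | mul_X p i hp => simp only [map_mul, eval_X]; exact hp.mul (measurable_pi_apply i)

theorem measurableSet_setOf_eval_eq_zero {σ R : Type*} [CommSemiring R] [MeasurableSpace R]
    [MeasurableSingletonClass R] [MeasurableAdd₂ R] [MeasurableMul₂ R] (p : MvPolynomial σ R) :
    MeasurableSet {x : σ → R | eval x p = 0} :=
  p.measurable_eval (measurableSet_singleton 0)

variable {R : Type*} [CommRing R] [IsDomain R] [MeasurableSpace R] [MeasurableSingletonClass R]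
  [MeasurableAdd₂ R] [MeasurableMul₂ R] (μ : Measure R) [SigmaFinite μ] [NullSingletonClass μ]

theorem measure_pi_fin_setOf_eval_eq_zero {n : ℕ} {p : MvPolynomial (Fin n) R} (hp : p ≠ 0) :
    Measure.pi (fun _ => μ) {x | eval x p = 0} = 0 := by
  induction n with
  | zero =>
    obtain ⟨a, rfl⟩ := C_surjective (Fin 0) p
    simp [show a ≠ 0 by rintro rfl; exact hp C_0]
  | succ n ih =>
    set q := finSuccEquiv R n p
    have hq : q.leadingCoeff ≠ 0 :=
      Polynomial.leadingCoeff_ne_zero.mpr ((finSuccEquiv R n).map_ne_zero_iff.mpr hp)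
    set e := MeasurableEquiv.piFinSuccAbove (fun _ : Fin (n + 1) => R) 0
    have hS := measurableSet_setOf_eval_eq_zero p
    rw [← ((measurePreserving_piFinSuccAbove (fun _ => μ) 0).symm e).measure_preimage
      hS.nullMeasurableSet, Measure.prod_apply_symm (e.symm.measurable hS)]
    refine (lintegral_congr_ae ?_).trans lintegral_zero
    filter_upwards [measure_eq_zero_iff_ae_notMem.mp (ih hq)] with s hs
    have hroots : q.map (eval s) ≠ 0 := fun h0 => hs <| by
      simpa only [Polynomial.leadingCoeff, Polynomial.coeff_map, Polynomial.coeff_zero] using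
        congrArg (Polynomial.coeff · q.natDegree) h0
    refine Set.Finite.measure_zero ((Polynomial.finite_setOfPred_isRoot hroots).subset ?_) μ
    intro y hy
    have he : e.symm (y, s) = Fin.cons y s := Fin.insertNth_zero' y s
    simpa [he, eval_eq_eval_mv_eval'] using hy

theorem measure_pi_setOf_eval_eq_zero {ι : Type*} [Fintype ι] {p : MvPolynomial ι R}
    (hp : p ≠ 0) : Measure.pi (fun _ => μ) {x | eval x p = 0} = 0 := by
  set f := (Fintype.equivFin ι).symm
  have hf : ∀ x, MeasurableEquiv.piCongrLeft (fun _ : ι => R) f x = x ∘ f.symm := fun x => by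
    rw [MeasurableEquiv.coe_piCongrLeft]
    exact (Equiv.eq_symm_apply _).mp (by ext; simp)
  rw [← (measurePreserving_piCongrLeft (fun _ => μ) f).measure_preimage
    (measurableSet_setOf_eval_eq_zero p).nullMeasurableSet]
  simpa [Set.preimage, hf, eval_rename] using
    measure_pi_fin_setOf_eval_eq_zero μ ((rename_injective _ f.symm.injective).ne hp)

theorem ae_eval_ne_zero {ι : Type*} [Fintype ι] {p : MvPolynomial ι R} (hp : p ≠ 0) :
    ∀ᵐ x ∂Measure.pi (fun _ => μ), eval x p ≠ 0 :=
  measure_eq_zero_iff_ae_notMem.mp (measure_pi_setOf_eval_eq_zero μ hp)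

end MvPolynomial

namespace Matrix

variable {n : Type*} [Fintype n] [DecidableEq n]

/-- Row `i` of `of fun i k => N i k / D i k` scaled by `∏ k, D i k`, written without division. -/
def clearRowDenoms {R : Type*} [CommMonoid R] (N D : Matrix n n R) : Matrix n n R :=
  of fun i k => N i k * ∏ k' ∈ Finset.univ.erase k, D i k'

theorem map_clearRowDenoms {R S : Type*} [CommSemiring R] [CommSemiring S] (f : R →+* S)
    (N D : Matrix n n R) : (clearRowDenoms N D).map f = clearRowDenoms (N.map f) (D.map f) := by
  ext i k
  simp [clearRowDenoms, map_prod]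

theorem det_clearRowDenoms {F : Type*} [Field F] (N D : Matrix n n F) (hD : ∀ i k, D i k ≠ 0) :
    (clearRowDenoms N D).det = (∏ i, ∏ k, D i k) * (of fun i k => N i k / D i k).det := by
  have : clearRowDenoms N D = of fun i k => (∏ k', D i k') * (N i k / D i k) := by
    ext i k
    rw [clearRowDenoms, of_apply, of_apply, ← Finset.mul_prod_erase _ _ (Finset.mem_univ k)]
    field_simp [hD i k]
  rw [this]
  exact det_mul_column (fun i => ∏ k', D i k') (of fun i k => N i k / D i k)

end Matrix

namespace XChannel

variable (K : ℕ)

abbrev ChannelIndex := Fin 2 × Fin K × Fin (K + 1)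

noncomputable def effectiveNum : Matrix (Fin K) (Fin K) (MvPolynomial (ChannelIndex K) ℂ) :=
  .of fun i k => if (i : ℕ) = 0 then X (0, k, 0) else X (0, k, i.succ) * X (1, k, 0)

noncomputable def effectiveDen : Matrix (Fin K) (Fin K) (MvPolynomial (ChannelIndex K) ℂ) :=
  .of fun i k => if (i : ℕ) = 0 then 1 else X (1, k, i.succ)

theorem det_clearRowDenoms_effective_ne_zero :
    (Matrix.clearRowDenoms (effectiveNum K) (effectiveDen K)).det ≠ 0 := by
  -- `g₀` sets every `h[2]` to `1` and makes the numerator matrix the identity.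
  let col : Fin K → Fin (K + 1) := fun k => if (k : ℕ) = 0 then 0 else k.succ
  let g₀ : ChannelIndex K → ℂ := fun c =>
    if c.1 = 0 then (if c.2.2 = col c.2.1 then 1 else 0) else 1
  have hNum : (effectiveNum K).map (eval g₀) = 1 := by
    ext i k
    simp only [effectiveNum, Matrix.map_apply, Matrix.of_apply, Matrix.one_apply]
    split_ifs <;> simp only [eval_X, map_mul, g₀, col] <;> split_ifs <;> simp_all [Fin.ext_iff]
  have hDen : (effectiveDen K).map (eval g₀) = .of fun _ _ => 1 := by
    ext i k
    simp only [effectiveDen, Matrix.map_apply, Matrix.of_apply]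
    split_ifs <;> simp [g₀]
  intro h
  have := congrArg (eval g₀) h
  rw [RingHom.map_det, RingHom.mapMatrix_apply, Matrix.map_clearRowDenoms, hNum, hDen] at this
  have hclear : Matrix.clearRowDenoms (1 : Matrix (Fin K) (Fin K) ℂ) (.of fun _ _ => 1) = 1 := by
    ext i k
    simp [Matrix.clearRowDenoms]
  simp [hclear] at this

theorem effectiveDen_map_eval_ne_zero {g : ChannelIndex K → ℂ}
    (hg : ∀ k j, g (1, k, j) ≠ 0) (i k : Fin K) : (effectiveDen K).map (eval g) i k ≠ 0 := by
  simp only [effectiveDen, Matrix.map_apply, Matrix.of_apply]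
  split_ifs <;> simp [hg]

theorem of_eval_effectiveNum_div_eval_effectiveDen (g : ChannelIndex K → ℂ) :
    (Matrix.of fun i k => eval g (effectiveNum K i k) / eval g (effectiveDen K i k)) =
      Matrix.of fun i k : Fin K => if (i : ℕ) = 0 then g (0, k, 0)
        else g (0, k, i.succ) * g (1, k, 0) / g (1, k, i.succ) := by
  ext i k
  simp only [effectiveNum, effectiveDen, Matrix.of_apply]
  split_ifs <;> simp

end XChannel

theorem Kx2_effective_matrix_invertible_ae_general (K : ℕ) :
    ∀ᵐ g : Fin 2 × Fin K × Fin (K + 1) → ℂ,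
      (∀ (k : Fin K) (j : Fin (K + 1)), g (1, k, j) ≠ 0) ∧
      IsUnit (Matrix.of (fun i k : Fin K =>
        if (i : ℕ) = 0 then g (0, k, 0)
        else g (0, k, i.succ) * g (1, k, 0) / g (1, k, i.succ))) := by
  rw [volume_pi]
  have hden : ∀ᵐ g ∂Measure.pi fun _ : XChannel.ChannelIndex K => (volume : Measure ℂ),
      ∀ k j, g (1, k, j) ≠ 0 := by
    simpa only [ae_all_iff, eval_X] using fun k j => ae_eval_ne_zero volume (X_ne_zero (1, k, j))
  have hdet := ae_eval_ne_zero volume (XChannel.det_clearRowDenoms_effective_ne_zero K)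
  filter_upwards [hden, hdet] with g hg hdet
  rw [RingHom.map_det, RingHom.mapMatrix_apply, Matrix.map_clearRowDenoms,
    Matrix.det_clearRowDenoms _ _ (XChannel.effectiveDen_map_eval_ne_zero K hg)] at hdet
  rw [Matrix.isUnit_iff_isUnit_det, isUnit_iff_ne_zero,
    ← XChannel.of_eval_effectiveNum_div_eval_effectiveDen]
  exact ⟨hg, right_ne_zero_of_mul hdet⟩

/-- For every `K ≥ 1`, for Lebesgue-almost every tuple of channel coefficients
`g : Fin 2 × Fin K × Fin (K+1) → ℂ` (where `g (ℓ, k, j)` is `h[ℓ+1][k+1][t_{j+1}]`),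
all coefficients `h[2][k][t_j]` are nonzero and the `K×K` effective channel matrix
`Ĥ₁` — whose first row has entries `h[1][k][t₁]` and whose row indexed by
`j ∈ {3,…,K+1}` has entries `h[1][k][t_j]·h[2][k][t₁]/h[2][k][t_j]` — is invertible. -/
theorem Kx2_effective_matrix_invertible_ae (K : ℕ) (hK : 1 ≤ K) :
    ∀ᵐ g : Fin 2 × Fin K × Fin (K + 1) → ℂ,
      (∀ (k : Fin K) (j : Fin (K + 1)), g (1, k, j) ≠ 0) ∧
      IsUnit (Matrix.of (fun i k : Fin K =>
        if (i : ℕ) = 0 then g (0, k, 0)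
        else g (0, k, i.succ) * g (1, k, 0) / g (1, k, i.succ))) :=
  Kx2_effective_matrix_invertible_ae_general K
end

section
/- In the K×2 X-channel scheme, if all h[1][k][n] and h[2][k][n] are nonzero for n ∈ T₂ and the K×K effective channel matrix Ĥ₁ (first row h[1][k][t₁], remaining rows h[1][k][t_j]·h[2][k][t₁]/h[2][k][t_j] for j ∈ {3,…,K+1}) is invertible, then the symbols (s₁[1],…,s₁[K]) are uniquely determined by receiver 1's noiseless observations (y₁[t₁], y₁[t₂], y₁[t₃],…,y₁[t_{K+1}]): the map (s₁[1],…,s₁[K],s₂[1],…,s₂[K]) ↦ (y₁[t₁],…,y₁[t_{K+1}]) determines the first K coordinates, i.e., any two symbol tuples producing the same observations at receiver 1 agree in s₁[1],…,s₁[K]. -/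
/-!
Zero forcing at receiver 1. In phase two the interference `s₂[k]` reaches receiver 1 through
`h[1][k][n] · h[1][k][t₂] / h[1][k][n] = h[1][k][t₂]`, i.e. aligned with its phase-one slot `t₂`, so
`y₁[t_j] - y₁[t₂]` is interference free. Together with `y₁[t₁]` these differences are `Ĥ₁ s₁`,
and `Ĥ₁` is invertible.
-/

open Finset
open scoped Matrix

theorem Finset.sum_Icc_one_eq_sum_fin {M : Type*} [AddCommMonoid M] (f : ℕ → M) (K : ℕ) :
    ∑ k ∈ Icc 1 K, f k = ∑ k : Fin K, f (k + 1) := by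
  rw [show Icc 1 K = Ico 1 (K + 1) from rfl, sum_Ico_eq_sum_range,
    Fin.sum_univ_eq_sum_range (fun k => f (k + 1)) K, Nat.add_sub_cancel]
  simp only [add_comm]

namespace XChannel

/-- Row `0` of `Ĥ₁` belongs to the slot `t₁`, row `i ≥ 1` to the slot `t_{i+2}`. -/
noncomputable def effChannel (K : ℕ) (h : ℕ → ℕ → ℕ → ℂ) (t : ℕ → ℕ) :
    Matrix (Fin K) (Fin K) ℂ :=
  Matrix.of fun i k : Fin K =>
    if (i : ℕ) = 0 then h 1 ((k : ℕ) + 1) (t 1)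
    else h 1 ((k : ℕ) + 1) (t ((i : ℕ) + 2)) * h 2 ((k : ℕ) + 1) (t 1)
      / h 2 ((k : ℕ) + 1) (t ((i : ℕ) + 2))

def zeroForced (K : ℕ) (t : ℕ → ℕ) (y₁ : ℕ → ℂ) : Fin K → ℂ :=
  fun i => if (i : ℕ) = 0 then y₁ (t 1) else y₁ (t ((i : ℕ) + 2)) - y₁ (t 2)

theorem zeroForced_congr {K : ℕ} {t : ℕ → ℕ} {y₁ y₁' : ℕ → ℂ}
    (hobs : ∀ j ∈ Icc 1 (K + 1), y₁ (t j) = y₁' (t j)) :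
    zeroForced K t y₁ = zeroForced K t y₁' := by
  funext i
  have hi := i.isLt
  simp only [zeroForced]
  split_ifs
  · exact hobs 1 (by simp)
  · rw [hobs _ (by simp only [mem_Icc]; omega), hobs 2 (by simp only [mem_Icc]; omega)]

theorem observation_sub_aligned {K j : ℕ} {h : ℕ → ℕ → ℕ → ℂ} {t : ℕ → ℕ} {s₁ s₂ y₁ : ℕ → ℂ}
    (hnz : ∀ k ∈ Icc 1 K, h 1 k (t j) ≠ 0)
    (hy₂ : y₁ (t 2) = ∑ k ∈ Icc 1 K, h 1 k (t 2) * s₂ k)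
    (hyj : y₁ (t j) = ∑ k ∈ Icc 1 K, h 1 k (t j) *
      ((h 2 k (t 1) / h 2 k (t j)) * s₁ k + (h 1 k (t 2) / h 1 k (t j)) * s₂ k)) :
    y₁ (t j) - y₁ (t 2) = ∑ k ∈ Icc 1 K, h 1 k (t j) * h 2 k (t 1) / h 2 k (t j) * s₁ k := by
  rw [hyj, hy₂, sub_eq_iff_eq_add, ← sum_add_distrib]
  exact sum_congr rfl fun k hk => by field_simp [hnz k hk]

theorem effChannel_mulVec {K : ℕ} {h : ℕ → ℕ → ℕ → ℂ} {t : ℕ → ℕ} {s₁ s₂ y₁ : ℕ → ℂ}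
    (hnz : ∀ k ∈ Icc 1 K, ∀ j ∈ Icc 3 (K + 1), h 1 k (t j) ≠ 0)
    (hy₁ : y₁ (t 1) = ∑ k ∈ Icc 1 K, h 1 k (t 1) * s₁ k)
    (hy₂ : y₁ (t 2) = ∑ k ∈ Icc 1 K, h 1 k (t 2) * s₂ k)
    (hyn : ∀ j ∈ Icc 3 (K + 1), y₁ (t j) = ∑ k ∈ Icc 1 K, h 1 k (t j) *
      ((h 2 k (t 1) / h 2 k (t j)) * s₁ k + (h 1 k (t 2) / h 1 k (t j)) * s₂ k)) :
    effChannel K h t *ᵥ (fun k : Fin K => s₁ (k + 1)) = zeroForced K t y₁ := by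
  funext i
  have hi := i.isLt
  simp only [Matrix.mulVec, dotProduct, effChannel, zeroForced, Matrix.of_apply, ite_mul]
  split_ifs with hi0
  · rw [hy₁, sum_Icc_one_eq_sum_fin]
  · have hj : (i : ℕ) + 2 ∈ Icc 3 (K + 1) := by simp only [mem_Icc]; omega
    rw [observation_sub_aligned (fun k hk => hnz k hk _ hj) hy₂ (hyn _ hj),
      sum_Icc_one_eq_sum_fin]

end XChannel

open XChannel in
theorem Kx2_xchannel_zero_forcing_general
    (K : ℕ)
    (h : ℕ → ℕ → ℕ → ℂ) (t : ℕ → ℕ)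
    (s s' : ℕ → ℕ → ℂ)
    (hnz : ∀ k ∈ Finset.Icc 1 K, ∀ j ∈ Finset.Icc 3 (K + 1),
      h 1 k (t j) ≠ 0 ∧ h 2 k (t j) ≠ 0)
    (hH : IsUnit (Matrix.of (fun i k : Fin K =>
      if (i : ℕ) = 0 then h 1 ((k : ℕ) + 1) (t 1)
      else h 1 ((k : ℕ) + 1) (t ((i : ℕ) + 2)) * h 2 ((k : ℕ) + 1) (t 1)
        / h 2 ((k : ℕ) + 1) (t ((i : ℕ) + 2)))))
    (y y' : ℕ → ℕ → ℂ)
    (hy1 : ∀ ℓ, y ℓ (t 1) = ∑ k ∈ Finset.Icc 1 K, h ℓ k (t 1) * s 1 k)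
    (hy2 : ∀ ℓ, y ℓ (t 2) = ∑ k ∈ Finset.Icc 1 K, h ℓ k (t 2) * s 2 k)
    (hyn : ∀ ℓ, ∀ j ∈ Finset.Icc 3 (K + 1), y ℓ (t j) =
      ∑ k ∈ Finset.Icc 1 K, h ℓ k (t j) *
        ((h 2 k (t 1) / h 2 k (t j)) * s 1 k + (h 1 k (t 2) / h 1 k (t j)) * s 2 k))
    (hy1' : ∀ ℓ, y' ℓ (t 1) = ∑ k ∈ Finset.Icc 1 K, h ℓ k (t 1) * s' 1 k)
    (hy2' : ∀ ℓ, y' ℓ (t 2) = ∑ k ∈ Finset.Icc 1 K, h ℓ k (t 2) * s' 2 k)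
    (hyn' : ∀ ℓ, ∀ j ∈ Finset.Icc 3 (K + 1), y' ℓ (t j) =
      ∑ k ∈ Finset.Icc 1 K, h ℓ k (t j) *
        ((h 2 k (t 1) / h 2 k (t j)) * s' 1 k + (h 1 k (t 2) / h 1 k (t j)) * s' 2 k))
    (hobs : ∀ j ∈ Finset.Icc 1 (K + 1), y 1 (t j) = y' 1 (t j)) :
    ∀ k ∈ Finset.Icc 1 K, s 1 k = s' 1 k := by
  have hnz₁ : ∀ k ∈ Icc 1 K, ∀ j ∈ Icc 3 (K + 1), h 1 k (t j) ≠ 0 :=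
    fun k hk j hj => (hnz k hk j hj).1
  have hsame : (fun k : Fin K => s 1 (k + 1)) = fun k : Fin K => s' 1 (k + 1) :=
    Matrix.mulVec_injective_iff_isUnit.mpr hH <| by
      change effChannel K h t *ᵥ _ = effChannel K h t *ᵥ _
      rw [effChannel_mulVec hnz₁ (hy1 1) (hy2 1) (hyn 1),
        effChannel_mulVec hnz₁ (hy1' 1) (hy2' 1) (hyn' 1), zeroForced_congr hobs]
  intro k hk
  obtain ⟨hk1, hkK⟩ := mem_Icc.mp hk
  obtain ⟨m, rfl⟩ : ∃ m, k = m + 1 := ⟨k - 1, by omega⟩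
  exact congrFun hsame ⟨m, by omega⟩

/-- In the K×2 X-channel scheme, if all phase-two channel coefficients are nonzero and
the `K×K` effective channel matrix `Ĥ₁` is invertible, then any two symbol tuples
producing the same noiseless observations `(y₁[t₁], …, y₁[t_{K+1}])` at receiver 1
agree in the symbols `s₁[1], …, s₁[K]`. -/
theorem Kx2_xchannel_zero_forcing
    (K : ℕ) (hK : 1 ≤ K)
    (h : ℕ → ℕ → ℕ → ℂ) (t : ℕ → ℕ)
    (s s' : ℕ → ℕ → ℂ)
    (hnz : ∀ k ∈ Finset.Icc 1 K, ∀ j ∈ Finset.Icc 3 (K + 1),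
      h 1 k (t j) ≠ 0 ∧ h 2 k (t j) ≠ 0)
    (hH : IsUnit (Matrix.of (fun i k : Fin K =>
      if (i : ℕ) = 0 then h 1 ((k : ℕ) + 1) (t 1)
      else h 1 ((k : ℕ) + 1) (t ((i : ℕ) + 2)) * h 2 ((k : ℕ) + 1) (t 1)
        / h 2 ((k : ℕ) + 1) (t ((i : ℕ) + 2)))))
    (y y' : ℕ → ℕ → ℂ)
    (hy1 : ∀ ℓ, y ℓ (t 1) = ∑ k ∈ Finset.Icc 1 K, h ℓ k (t 1) * s 1 k)
    (hy2 : ∀ ℓ, y ℓ (t 2) = ∑ k ∈ Finset.Icc 1 K, h ℓ k (t 2) * s 2 k)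
    (hyn : ∀ ℓ, ∀ j ∈ Finset.Icc 3 (K + 1), y ℓ (t j) =
      ∑ k ∈ Finset.Icc 1 K, h ℓ k (t j) *
        ((h 2 k (t 1) / h 2 k (t j)) * s 1 k + (h 1 k (t 2) / h 1 k (t j)) * s 2 k))
    (hy1' : ∀ ℓ, y' ℓ (t 1) = ∑ k ∈ Finset.Icc 1 K, h ℓ k (t 1) * s' 1 k)
    (hy2' : ∀ ℓ, y' ℓ (t 2) = ∑ k ∈ Finset.Icc 1 K, h ℓ k (t 2) * s' 2 k)
    (hyn' : ∀ ℓ, ∀ j ∈ Finset.Icc 3 (K + 1), y' ℓ (t j) =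
      ∑ k ∈ Finset.Icc 1 K, h ℓ k (t j) *
        ((h 2 k (t 1) / h 2 k (t j)) * s' 1 k + (h 1 k (t 2) / h 1 k (t j)) * s' 2 k))
    (hobs : ∀ j ∈ Finset.Icc 1 (K + 1), y 1 (t j) = y' 1 (t j)) :
    ∀ k ∈ Finset.Icc 1 K, s 1 k = s' 1 k :=
  Kx2_xchannel_zero_forcing_general K h t s s' hnz hH y y' hy1 hy2 hyn hy1' hy2' hyn' hobs
end

section
/- In the three-user interference channel scheme, the aligned-interference identity holds at receiver 3 in time slot 4: y₃[4] − y₃[1] = h[3][1][4]·(h[2][1][2]/h[2][1][4])·a₂ + h[3][3][4]·(h[2][3][2]/h[2][3][4])·c₁. That is, the contribution of the symbols a₁ and b₁ in y₃[4] coincides exactly with the equation y₃[1] received in time slot 1, so subtracting it leaves a linear combination of a₂ and c₁ only. -/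
theorem threeUserIC_alignment_rx3_slot4_general
    (h : ℕ → ℕ → ℕ → ℂ) (a₁ a₂ b₁ c₁ : ℂ)
    (h314 : h 3 1 4 ≠ 0) (h324 : h 3 2 4 ≠ 0)
    (x : ℕ → ℕ → ℂ)
    (hx11 : x 1 1 = a₁) (hx21 : x 2 1 = b₁) (hx31 : x 3 1 = 0)
    (hx14 : x 1 4 = (h 3 1 1 / h 3 1 4) * a₁ + (h 2 1 2 / h 2 1 4) * a₂)
    (hx24 : x 2 4 = (h 3 2 1 / h 3 2 4) * b₁)
    (hx34 : x 3 4 = (h 2 3 2 / h 2 3 4) * c₁)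
    (y : ℕ → ℕ → ℂ)
    (hy : ∀ ℓ t, y ℓ t = h ℓ 1 t * x 1 t + h ℓ 2 t * x 2 t + h ℓ 3 t * x 3 t) :
    y 3 4 - y 3 1 = h 3 1 4 * (h 2 1 2 / h 2 1 4) * a₂ + h 3 3 4 * (h 2 3 2 / h 2 3 4) * c₁ := by
  rw [hy, hy, hx14, hx24, hx34, hx11, hx21, hx31]
  -- the slot-4 precoders of `a₁`, `b₁` cancel the slot-4 gains to receiver 3, leaving the slot-1 ones
  linear_combination a₁ * mul_div_cancel₀ (h 3 1 1) h314 + b₁ * mul_div_cancel₀ (h 3 2 1) h324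

/-- Aligned-interference identity at receiver 3 in time slot 4 of the three-user interference channel scheme: `y₃[4] − y₃[1] = h₃₁[4]·(h₂₁[2]/h₂₁[4])·a₂ + h₃₃[4]·(h₂₃[2]/h₂₃[4])·c₁`. -/
theorem threeUserIC_alignment_rx3_slot4
    (h : ℕ → ℕ → ℕ → ℂ) (a₁ a₂ b₁ b₂ c₁ c₂ : ℂ)
    (h314 : h 3 1 4 ≠ 0) (h214 : h 2 1 4 ≠ 0) (h324 : h 3 2 4 ≠ 0) (h234 : h 2 3 4 ≠ 0)
    (h315 : h 3 1 5 ≠ 0) (h325 : h 3 2 5 ≠ 0) (h125 : h 1 2 5 ≠ 0) (h135 : h 1 3 5 ≠ 0)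
    (x : ℕ → ℕ → ℂ)
    (hx11 : x 1 1 = a₁) (hx21 : x 2 1 = b₁) (hx31 : x 3 1 = 0)
    (hx12 : x 1 2 = a₂) (hx22 : x 2 2 = 0) (hx32 : x 3 2 = c₁)
    (hx13 : x 1 3 = 0) (hx23 : x 2 3 = b₂) (hx33 : x 3 3 = c₂)
    (hx14 : x 1 4 = (h 3 1 1 / h 3 1 4) * a₁ + (h 2 1 2 / h 2 1 4) * a₂)
    (hx24 : x 2 4 = (h 3 2 1 / h 3 2 4) * b₁)
    (hx34 : x 3 4 = (h 2 3 2 / h 2 3 4) * c₁)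
    (hx15 : x 1 5 = (h 3 1 1 / h 3 1 5) * a₁)
    (hx25 : x 2 5 = (h 3 2 1 / h 3 2 5) * b₁ + (h 1 2 3 / h 1 2 5) * b₂)
    (hx35 : x 3 5 = (h 1 3 3 / h 1 3 5) * c₂)
    (y : ℕ → ℕ → ℂ)
    (hy : ∀ ℓ t, y ℓ t = h ℓ 1 t * x 1 t + h ℓ 2 t * x 2 t + h ℓ 3 t * x 3 t) :
    y 3 4 - y 3 1 = h 3 1 4 * (h 2 1 2 / h 2 1 4) * a₂ + h 3 3 4 * (h 2 3 2 / h 2 3 4) * c₁ :=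
  threeUserIC_alignment_rx3_slot4_general h a₁ a₂ b₁ c₁ h314 h324 x hx11 hx21 hx31 hx14 hx24 hx34 y
    hy
end

section
/- In the three-user interference channel scheme, suppose the following three 2×2 effective determinants are nonzero: (i) h[1][1][1]·h[1][2][5]·h[3][2][1]/h[3][2][5] − h[1][2][1]·h[1][1][5]·h[3][1][1]/h[3][1][5] ≠ 0; (ii) h[1][1][2]·h[1][3][4]·h[2][3][2]/h[2][3][4] − h[1][3][2]·h[1][1][4]·h[2][1][2]/h[2][1][4] ≠ 0; (iii) h[2][2][3]·h[2][3][5]·h[1][3][3]/h[1][3][5] − h[2][3][3]·h[2][2][5]·h[1][2][3]/h[1][2][5] ≠ 0. Then the linear map ℂ⁶ → ℂ¹⁵ sending the symbols (a₁, a₂, b₁, b₂, c₁, c₂) to the noiseless received signals (y_ℓ[t]) for ℓ ∈ {1,2,3}, t ∈ {1,…,5} is injective; i.e., all six information symbols are uniquely recoverable from the received signals. -/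
/-! Decoding is successive interference cancellation: the slot-4 and slot-5 precoders make the
interference at each receiver align, so receiver 1 first solves a 2×2 system for `(a₁, b₁)`
from `y₁[1]` and `y₁[5] - y₁[3]`, then, cancelling their contribution, one for `(a₂, c₁)` from
`y₁[2]` and `y₁[4]`, and receiver 2 one for `(b₂, c₂)` from `y₂[3]` and `y₂[5]`. Each system
is invertible by one of the three determinant hypotheses. -/

theorem eq_and_eq_of_det_ne_zero_s12 {R : Type*} [CommRing R] [NoZeroDivisors R]
    {m₁₁ m₁₂ m₂₁ m₂₂ x y x' y' : R} (hdet : m₁₁ * m₂₂ - m₁₂ * m₂₁ ≠ 0)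
    (h₁ : m₁₁ * x + m₁₂ * y = m₁₁ * x' + m₁₂ * y')
    (h₂ : m₂₁ * x + m₂₂ * y = m₂₁ * x' + m₂₂ * y') :
    x = x' ∧ y = y' :=
  ⟨mul_left_cancel₀ hdet (by linear_combination m₂₂ * h₁ - m₁₂ * h₂),
    mul_left_cancel₀ hdet (by linear_combination m₁₁ * h₂ - m₂₁ * h₁)⟩

theorem threeUserIC_decodability_general
    (h : ℕ → ℕ → ℕ → ℂ)
    (h125 : h 1 2 5 ≠ 0) (h135 : h 1 3 5 ≠ 0)
    (hdet1 : h 1 1 1 * (h 1 2 5 * h 3 2 1 / h 3 2 5)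
        - h 1 2 1 * (h 1 1 5 * h 3 1 1 / h 3 1 5) ≠ 0)
    (hdet2 : h 1 1 2 * (h 1 3 4 * h 2 3 2 / h 2 3 4)
        - h 1 3 2 * (h 1 1 4 * h 2 1 2 / h 2 1 4) ≠ 0)
    (hdet3 : h 2 2 3 * (h 2 3 5 * h 1 3 3 / h 1 3 5)
        - h 2 3 3 * (h 2 2 5 * h 1 2 3 / h 1 2 5) ≠ 0) :
    Function.Injective (fun p : ℂ × ℂ × ℂ × ℂ × ℂ × ℂ =>
      let a₁ := p.1; let a₂ := p.2.1; let b₁ := p.2.2.1; let b₂ := p.2.2.2.1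
      let c₁ := p.2.2.2.2.1; let c₂ := p.2.2.2.2.2
      -- transmit signals x k t for k ∈ {1,2,3}, t ∈ {1,…,5}
      let x : ℕ → ℕ → ℂ := fun k t =>
        if t = 1 then (if k = 1 then a₁ else if k = 2 then b₁ else 0)
        else if t = 2 then (if k = 1 then a₂ else if k = 2 then 0 else c₁)
        else if t = 3 then (if k = 1 then 0 else if k = 2 then b₂ else c₂)
        else if t = 4 then
          (if k = 1 then (h 3 1 1 / h 3 1 4) * a₁ + (h 2 1 2 / h 2 1 4) * a₂
           else if k = 2 then (h 3 2 1 / h 3 2 4) * b₁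
           else (h 2 3 2 / h 2 3 4) * c₁)
        else
          (if k = 1 then (h 3 1 1 / h 3 1 5) * a₁
           else if k = 2 then (h 3 2 1 / h 3 2 5) * b₁ + (h 1 2 3 / h 1 2 5) * b₂
           else (h 1 3 3 / h 1 3 5) * c₂)
      -- noiseless received signals y ℓ t
      (fun (ℓ : Fin 3) (τ : Fin 5) =>
        h ((ℓ : ℕ) + 1) 1 ((τ : ℕ) + 1) * x 1 ((τ : ℕ) + 1)
          + h ((ℓ : ℕ) + 1) 2 ((τ : ℕ) + 1) * x 2 ((τ : ℕ) + 1)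
          + h ((ℓ : ℕ) + 1) 3 ((τ : ℕ) + 1) * x 3 ((τ : ℕ) + 1))) := by
  rintro ⟨a₁, a₂, b₁, b₂, c₁, c₂⟩ ⟨a₁', a₂', b₁', b₂', c₁', c₂'⟩ hy
  have y (ℓ : Fin 3) (τ : Fin 5) := congr_fun₂ hy ℓ τ
  have y₁₁ := y 0 0; have y₁₂ := y 0 1; have y₁₃ := y 0 2; have y₁₄ := y 0 3
  have y₁₅ := y 0 4; have y₂₃ := y 1 2; have y₂₅ := y 1 4
  simp only [Fin.isValue, Fin.coe_ofNat_eq_mod, Nat.zero_mod, Nat.one_mod, Nat.reduceMod,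
    Nat.mod_succ, Nat.reduceAdd, zero_add, add_zero, Nat.reduceEqDiff, OfNat.ofNat_ne_one,
    one_ne_zero, ↓reduceIte, mul_zero] at y₁₁ y₁₂ y₁₃ y₁₄ y₁₅ y₂₃ y₂₅
  -- in `y₁[5] - y₁[3]` the slot-5 precoding aligns `b₂` and `c₂` with slot 3, so they cancel
  have align_b₂ : h 1 2 5 * (h 1 2 3 / h 1 2 5) = h 1 2 3 := mul_div_cancel₀ _ h125
  have align_c₂ : h 1 3 5 * (h 1 3 3 / h 1 3 5) = h 1 3 3 := mul_div_cancel₀ _ h135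
  obtain ⟨rfl, rfl⟩ : a₁ = a₁' ∧ b₁ = b₁' := eq_and_eq_of_det_ne_zero_s12 hdet1 y₁₁
    (by linear_combination y₁₅ - y₁₃ + (b₂' - b₂) * align_b₂ + (c₂' - c₂) * align_c₂)
  obtain ⟨rfl, rfl⟩ : a₂ = a₂' ∧ c₁ = c₁' := eq_and_eq_of_det_ne_zero_s12 hdet2 y₁₂
    (by linear_combination y₁₄)
  obtain ⟨rfl, rfl⟩ : b₂ = b₂' ∧ c₂ = c₂' := eq_and_eq_of_det_ne_zero_s12 hdet3 y₂₃
    (by linear_combination y₂₅)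
  rfl

/-- In the three-user interference channel scheme, if the three 2×2 effective
determinants are nonzero, then the linear map `ℂ⁶ → ℂ¹⁵` sending the symbols
`(a₁, a₂, b₁, b₂, c₁, c₂)` to the noiseless received signals `(y_ℓ[t])`, `ℓ ∈ {1,2,3}`,
`t ∈ {1,…,5}`, is injective: any two symbol tuples producing the same received signals
coincide. -/
theorem threeUserIC_decodability
    (h : ℕ → ℕ → ℕ → ℂ)
    (h314 : h 3 1 4 ≠ 0) (h214 : h 2 1 4 ≠ 0) (h324 : h 3 2 4 ≠ 0) (h234 : h 2 3 4 ≠ 0)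
    (h315 : h 3 1 5 ≠ 0) (h325 : h 3 2 5 ≠ 0) (h125 : h 1 2 5 ≠ 0) (h135 : h 1 3 5 ≠ 0)
    (hdet1 : h 1 1 1 * (h 1 2 5 * h 3 2 1 / h 3 2 5)
        - h 1 2 1 * (h 1 1 5 * h 3 1 1 / h 3 1 5) ≠ 0)
    (hdet2 : h 1 1 2 * (h 1 3 4 * h 2 3 2 / h 2 3 4)
        - h 1 3 2 * (h 1 1 4 * h 2 1 2 / h 2 1 4) ≠ 0)
    (hdet3 : h 2 2 3 * (h 2 3 5 * h 1 3 3 / h 1 3 5)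
        - h 2 3 3 * (h 2 2 5 * h 1 2 3 / h 1 2 5) ≠ 0) :
    Function.Injective (fun p : ℂ × ℂ × ℂ × ℂ × ℂ × ℂ =>
      let a₁ := p.1; let a₂ := p.2.1; let b₁ := p.2.2.1; let b₂ := p.2.2.2.1
      let c₁ := p.2.2.2.2.1; let c₂ := p.2.2.2.2.2
      -- transmit signals x k t for k ∈ {1,2,3}, t ∈ {1,…,5}
      let x : ℕ → ℕ → ℂ := fun k t =>
        if t = 1 then (if k = 1 then a₁ else if k = 2 then b₁ else 0)
        else if t = 2 then (if k = 1 then a₂ else if k = 2 then 0 else c₁)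
        else if t = 3 then (if k = 1 then 0 else if k = 2 then b₂ else c₂)
        else if t = 4 then
          (if k = 1 then (h 3 1 1 / h 3 1 4) * a₁ + (h 2 1 2 / h 2 1 4) * a₂
           else if k = 2 then (h 3 2 1 / h 3 2 4) * b₁
           else (h 2 3 2 / h 2 3 4) * c₁)
        else
          (if k = 1 then (h 3 1 1 / h 3 1 5) * a₁
           else if k = 2 then (h 3 2 1 / h 3 2 5) * b₁ + (h 1 2 3 / h 1 2 5) * b₂
           else (h 1 3 3 / h 1 3 5) * c₂)
      -- noiseless received signals y ℓ t
      (fun (ℓ : Fin 3) (τ : Fin 5) =>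
        h ((ℓ : ℕ) + 1) 1 ((τ : ℕ) + 1) * x 1 ((τ : ℕ) + 1)
          + h ((ℓ : ℕ) + 1) 2 ((τ : ℕ) + 1) * x 2 ((τ : ℕ) + 1)
          + h ((ℓ : ℕ) + 1) 3 ((τ : ℕ) + 1) * x 3 ((τ : ℕ) + 1))) :=
  threeUserIC_decodability_general h h125 h135 hdet1 hdet2 hdet3
end

section
/- For every real S > 0, [(4/3)·log₂(1+2S) + (4/3)·log₂(1 + 1/(1 + 1/S))] − [(2/3)·log₂(1+2S) + (2/3)·log₂(1 + (2/3)S)] ≤ (2/3)·log₂ 3 + 4/3, and moreover (2/3)·log₂ 3 + 4/3 ≤ 2.39. -/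
/-! Since `1 / (1 + 1 / S) < 1`, the second term of the outer bound is at most `(4/3) log₂ 2`,
and since `1 + 2S ≤ 3 (1 + (2/3) S)`, the excess `(2/3) log₂ (1 + 2S)` over the achievable rate's
first term is at most `(2/3) (log₂ 3 + log₂ (1 + (2/3) S))`. The numerical bound follows from
`3 ^ 200 ≤ 2 ^ 317`, i.e. `log₂ 3 ≤ 1.585`. -/

open Real

lemma Real.logb_one_add_le_logb_two {b x : ℝ} (hb : 1 < b) (hx₀ : 0 ≤ x) (hx₁ : x ≤ 1) :
    logb b (1 + x) ≤ logb b 2 :=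
  logb_le_logb_of_le hb (by positivity) (by linarith)

lemma one_div_one_add_one_div_le_one {S : ℝ} (hS : 0 < S) : 1 / (1 + 1 / S) ≤ 1 := by
  rw [div_le_one (by positivity)]
  linarith [one_div_pos.mpr hS]

lemma Real.logb_one_add_two_mul_le {b S : ℝ} (hb : 1 < b) (hS : 0 ≤ S) :
    logb b (1 + 2 * S) ≤ logb b 3 + logb b (1 + (2 / 3) * S) := by
  rw [← logb_mul (by norm_num) (by positivity)]
  exact logb_le_logb_of_le hb (by positivity) (by linarith)

lemma Real.logb_le_div_of_pow_le_pow {b x : ℝ} {m n : ℕ} (hb : 1 < b) (hx : 0 < x) (hn : 0 < n)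
    (h : x ^ n ≤ b ^ m) : logb b x ≤ m / n := by
  rw [le_div_iff₀ (by positivity), mul_comm, ← logb_pow]
  calc logb b (x ^ n) ≤ logb b (b ^ m) := logb_le_logb_of_le hb (by positivity) h
    _ = m := by rw [logb_pow, logb_self_eq_one hb, mul_one]

lemma Real.logb_two_three_le : logb 2 3 ≤ 317 / 200 := by
  have h : (3 : ℝ) ^ 200 ≤ 2 ^ 317 := by
    rw [show 317 = 17 + 100 * 3 by rfl, pow_add, pow_mul]
    norm_num
  exact_mod_cast logb_le_div_of_pow_le_pow (by norm_num) (by norm_num) (by norm_num) h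

/-- Gap bound in the proof of Corollary 2: for every real `S > 0`, the difference
between the outer bound `(4/3)log₂(1+2S) + (4/3)log₂(1+1/(1+1/S))` and the achievable
rate `(2/3)log₂(1+2S) + (2/3)log₂(1+(2/3)S)` is at most `(2/3)log₂ 3 + 4/3`, and
`(2/3)log₂ 3 + 4/3 ≤ 2.39`. -/
theorem xchannel_gap_bound :
    (∀ S : ℝ, 0 < S →
      ((4 / 3) * Real.logb 2 (1 + 2 * S)
          + (4 / 3) * Real.logb 2 (1 + 1 / (1 + 1 / S)))
        - ((2 / 3) * Real.logb 2 (1 + 2 * S)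
          + (2 / 3) * Real.logb 2 (1 + (2 / 3) * S))
        ≤ (2 / 3) * Real.logb 2 3 + 4 / 3) ∧
    (2 / 3) * Real.logb 2 3 + 4 / 3 ≤ 2.39 := by
  refine ⟨fun S hS => ?_, ?_⟩
  · have h_outer := logb_one_add_le_logb_two one_lt_two (by positivity)
      (one_div_one_add_one_div_le_one hS)
    have h_inner := logb_one_add_two_mul_le one_lt_two hS.le
    rw [logb_self_eq_one one_lt_two] at h_outer
    linarith
  · linarith [logb_two_three_le]
end
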